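/- arXiv:0709.3120 — 2 statements merged into one kernel-verified Lean document; each statement's English description precedes it below -/
import Mathlib

section
/- Let f : ℝ → ℂ be a smooth (infinitely differentiable) function for which there exists δ > 0 such that f vanishes on [0, δ] and on [2π − δ, 2π]. Then there exists a sequence (p_k) of finite linear combinations of the exponentials x ↦ exp(i(n + ε/4)x), n ∈ ℤ, such that ∫₀^{2π} |p_k(x) − f(x)|² dx → 0 and ∫₀^{2π} |(D p_k)(x) − (D f)(x)|² dx → 0 as k → ∞. (This shows the functions smooth on [0,2π] and vanishing near the endpoints lie in the domain of the closure of the transformed APS operator.) -/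
open scoped Real
open Complex Set Filter MeasureTheory
open scoped ContDiff

namespace ApsAux

lemma deriv_zero_on_Icc {h : ℝ → ℂ} (hc : Continuous (deriv h)) {a b : ℝ} (hab : a < b)
    (hz : ∀ x ∈ Icc a b, h x = 0) : ∀ x ∈ Icc a b, deriv h x = 0 := by
  have hioo : ∀ x ∈ Ioo a b, deriv h x = 0 := by
    intro x hx
    have hev : h =ᶠ[nhds x] (fun _ => (0:ℂ)) :=
      Filter.eventuallyEq_of_mem (Ioo_mem_nhds hx.1 hx.2) (fun y hy => hz y (Ioo_subset_Icc_self hy))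
    rw [hev.deriv_eq, deriv_const]
  have key : ∀ (c : ℝ) (l : Filter ℝ), l.NeBot → l ≤ nhds c →
      (∀ᶠ y in l, deriv h y = 0) → deriv h c = 0 := by
    intro c l hl hle hev
    have hev' : deriv h =ᶠ[l] (fun _ => (0:ℂ)) := hev
    haveI := hl
    exact tendsto_nhds_unique ((hc.tendsto c).mono_left hle)
      (Filter.Tendsto.congr' hev'.symm tendsto_const_nhds)
  intro x hx
  rcases eq_or_lt_of_le hx.1 with h1 | h1
  · refine key x (nhdsWithin x (Ioi x)) (by rw [← h1]; infer_instance) nhdsWithin_le_nhds ?_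
    filter_upwards [Ioo_mem_nhdsGT_of_mem (by rw [← h1]; exact Set.left_mem_Ico.2 hab)] with y hy
    exact hioo y hy
  rcases eq_or_lt_of_le hx.2 with h2 | h2
  · refine key x (nhdsWithin x (Iio x)) (by rw [h2]; infer_instance) nhdsWithin_le_nhds ?_
    filter_upwards [Ioo_mem_nhdsLT_of_mem (by rw [h2]; exact Set.right_mem_Ioc.2 hab)] with y hy
    exact hioo y hy
  · exact hioo x ⟨h1, h2⟩

/-- Iterated derivatives of a smooth function vanishing on `Icc a b` vanish on `Icc a b`. -/
lemma iter_deriv_zero_on_Icc {g : ℝ → ℂ} (hg : ContDiff ℝ ∞ g) {a b : ℝ} (hab : a < b)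
    (hz : ∀ x ∈ Icc a b, g x = 0) : ∀ (j : ℕ), ∀ x ∈ Icc a b, deriv^[j] g x = 0 := by
  intro j
  induction j with
  | zero => exact hz
  | succ n ih =>
      have hcont : Continuous (deriv (deriv^[n] g)) := by
        have : ContDiff ℝ ∞ (deriv^[n+1] g) := hg.iterate_deriv (n+1)
        rw [Function.iterate_succ_apply'] at this
        exact this.continuous
      intro x hx
      rw [Function.iterate_succ_apply']
      exact deriv_zero_on_Icc hcont hab ih x hx

end ApsAux


namespace ApsAux2

lemma fourier_norm_one {T : ℝ} [Fact (0 < T)] (n : ℤ) (z : AddCircle T) :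
    ‖(fourier n z : ℂ)‖ = 1 := by
  rw [fourier_apply, Circle.norm_coe]

lemma coeffOn_zero_add {h : ℝ → ℂ} (hab : (0:ℝ) < 0 + 2*π) (hab' : (0:ℝ) < 2*π) (n : ℤ) :
    fourierCoeffOn hab h n = fourierCoeffOn hab' h n := by
  simp only [zero_add]

lemma coeffOn_deriv (hab : (0:ℝ) < 2*π) {h : ℝ → ℂ} (hh : ContDiff ℝ ∞ h)
    (h0 : h 0 = 0) (h2 : h (2*π) = 0) (n : ℤ) :
    fourierCoeffOn hab (deriv h) n = Complex.I * n * fourierCoeffOn hab h n := by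
  have hd : Differentiable ℝ h := hh.differentiable (by norm_num)
  have hd' : Continuous (deriv h) := (contDiff_infty_iff_deriv.mp hh).2.continuous
  rcases eq_or_ne n 0 with rfl | hn
  · rw [fourierCoeffOn_eq_integral]
    simp only [neg_zero, fourier_zero, one_smul, Int.cast_zero, mul_zero, zero_mul]
    rw [intervalIntegral.integral_deriv_eq_sub (fun x _ => hd x)
      (hd'.intervalIntegrable _ _), h2, h0]
    simp
  · have key := fourierCoeffOn_of_hasDerivAt hab hn
      (f := h) (f' := deriv h) (fun x _ => (hd x).hasDerivAt)
      (hd'.intervalIntegrable _ _)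
    rw [h2, h0] at key
    have hπ : (π : ℂ) ≠ 0 := by exact_mod_cast Real.pi_ne_zero
    have hnc : (n : ℂ) ≠ 0 := by exact_mod_cast hn
    have h2π : (2*(π:ℂ)) ≠ 0 := by simpa using hπ
    have hIn : (-2*(π:ℂ)*Complex.I*n) ≠ 0 := by
      simp [hπ, hnc, Complex.I_ne_zero]
    rw [sub_self, mul_zero, zero_sub] at key
    push_cast at key
    field_simp at key
    apply mul_left_cancel₀ h2π
    linear_combination -key

lemma coeffOn_norm_le (hab : (0:ℝ) < 2*π) {h : ℝ → ℂ} (C : ℝ)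
    (hC : ∀ x ∈ Icc (0:ℝ) (2*π), ‖h x‖ ≤ C) (n : ℤ) : ‖fourierCoeffOn hab h n‖ ≤ C := by
  haveI : Fact (0 < 2*π - 0) := ⟨by linarith⟩
  rw [fourierCoeffOn_eq_integral]
  have hI : ‖∫ x in (0:ℝ)..(2*π), (fourier (-n) (x : AddCircle (2*π-0)) : ℂ) • h x‖
      ≤ C * |2*π - 0| := by
    apply intervalIntegral.norm_integral_le_of_norm_le_const
    intro x hx
    rw [Set.uIoc_of_le hab.le] at hx
    rw [smul_eq_mul, norm_mul, fourier_norm_one, one_mul]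
    exact hC x (Ioc_subset_Icc_self hx)
  calc ‖(1 / (2*π - 0) : ℝ) • ∫ x in (0:ℝ)..(2*π), (fourier (-n) (x : AddCircle (2*π-0)) : ℂ) • h x‖
      = (1 / (2*π)) * ‖∫ x in (0:ℝ)..(2*π), (fourier (-n) (x : AddCircle (2*π-0)) : ℂ) • h x‖ := by
        rw [norm_smul, Real.norm_eq_abs,
          abs_of_pos (by rw [show (2*π-0:ℝ) = 2*π by ring]; positivity : (0:ℝ) < 1/(2*π-0))]
        norm_num
    _ ≤ (1 / (2*π)) * (C * |2*π - 0|) := by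
        apply mul_le_mul_of_nonneg_left hI (by positivity)
    _ = C := by
        rw [abs_of_pos (by linarith [Real.pi_pos])]
        field_simp
        ring



lemma fourier_eval (n : ℤ) (x : ℝ) [Fact (0 < 2*π)] :
    (fourier n (x : AddCircle (2*π)) : ℂ) = Complex.exp (Complex.I*n*x) := by
  rw [fourier_coe_apply]
  congr 1
  have hπ : (π : ℂ) ≠ 0 := by exact_mod_cast Real.pi_ne_zero
  push_cast
  rw [div_eq_iff (by simp [hπ] : ((2:ℂ)*π) ≠ 0)]
  ring

lemma fourier_approx (g : ℝ → ℂ) (hg : ContDiff ℝ ∞ g)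
    (hvan : ∀ (j : ℕ), deriv^[j] g 0 = 0 ∧ deriv^[j] g (2*π) = 0) (k : ℕ) :
    ∃ (s : Finset ℤ) (a : ℤ → ℂ), ∀ x ∈ Set.Icc (0:ℝ) (2*π),
      ‖(∑ n ∈ s, a n * Complex.exp (Complex.I*n*x)) - g x‖ ≤ 1/(k+1) ∧
      ‖(∑ n ∈ s, (Complex.I*n) * (a n * Complex.exp (Complex.I*n*x))) - deriv g x‖ ≤ 1/(k+1) ∧
      ‖(∑ n ∈ s, (Complex.I*n)^2 * (a n * Complex.exp (Complex.I*n*x))) - deriv (deriv g) x‖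
        ≤ 1/(k+1) := by
  have hab : (0:ℝ) < 2*π := by positivity
  haveI hT : Fact (0 < 2*π) := ⟨hab⟩
  have hgj : ∀ j : ℕ, ContDiff ℝ ∞ (deriv^[j] g) := fun j => hg.iterate_deriv j
  -- the continuous lifts to the circle
  have hend : ∀ j : ℕ, deriv^[j] g 0 = deriv^[j] g (2*π) := fun j => by
    rw [(hvan j).1, (hvan j).2]
  set G : ℕ → C(AddCircle (2*π), ℂ) := fun j =>
    ⟨AddCircle.liftIco (2*π) 0 (deriv^[j] g),
      AddCircle.liftIco_zero_continuous (hend j) ((hgj j).continuous.continuousOn)⟩ with hG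
  set c : ℕ → ℤ → ℂ := fun j n => fourierCoeff (⇑(G j)) n with hc
  have hc_eq : ∀ j n, c j n = fourierCoeffOn hab (deriv^[j] g) n := by
    intro j n
    have := fourierCoeff_liftIco_eq (T := 2*π) (a := 0) (deriv^[j] g) n
    rw [hc]
    dsimp only [hG]
    rw [ContinuousMap.coe_mk, this, coeffOn_zero_add _ hab]
  have rel : ∀ j n, c (j+1) n = Complex.I * n * c j n := by
    intro j n
    rw [hc_eq, hc_eq]
    rw [show deriv^[j+1] g = deriv (deriv^[j] g) from Function.iterate_succ_apply' _ _ _]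
    exact coeffOn_deriv hab (hgj j) (hvan j).1 (hvan j).2 n
  have hsummable : ∀ j : ℕ, Summable (c j) := by
    intro j
    obtain ⟨C, hC⟩ : ∃ C, ∀ x ∈ Icc (0:ℝ) (2*π), ‖deriv^[j+2] g x‖ ≤ C :=
      isCompact_Icc.exists_bound_of_continuousOn ((hgj (j+2)).continuous.continuousOn)
    apply Summable.of_norm_bounded_eventually (g := fun n : ℤ => C * (1/(n:ℝ)^2))
      (((Real.summable_one_div_int_pow (p := 2)).mpr one_lt_two).mul_left C)
    rw [Filter.eventually_cofinite]
    apply Set.Finite.subset (Set.finite_singleton (0:ℤ))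
    intro n hn
    simp only [Set.mem_setOf_eq, not_le] at hn
    simp only [Set.mem_singleton_iff]
    by_contra hn0
    have hb : ‖c (j+2) n‖ ≤ C := by
      rw [hc_eq]; exact coeffOn_norm_le hab C hC n
    have h2 : c (j+2) n = Complex.I * n * (Complex.I * n * c j n) := by rw [rel, rel]
    have hnr : ((n:ℝ)) ≠ 0 := Int.cast_ne_zero.mpr hn0
    have hnn : (0:ℝ) < (n:ℝ)^2 := by positivity
    have hnorm : ‖c (j+2) n‖ = (n:ℝ)^2 * ‖c j n‖ := by
      rw [h2, norm_mul, norm_mul, norm_mul, norm_mul, Complex.norm_I, Complex.norm_intCast]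
      rw [← _root_.sq_abs ((n:ℝ))]
      ring
    rw [mul_one_div] at hn
    have hlt := (div_lt_iff₀ hnn).mp hn
    linarith
  have hasSumj : ∀ j, HasSum (fun n => c j n • fourier n) (G j) := fun j =>
    hasSum_fourier_series_of_summable (hsummable j)
  have hkpos : (0:ℝ) < 1/(k+1) := by positivity
  have ev : ∀ j, ∀ᶠ t in (atTop : Filter (Finset ℤ)),
      ‖(∑ n ∈ t, c j n • fourier n) - G j‖ < 1/(k+1) := by
    intro j
    have ht : Filter.Tendsto (fun t : Finset ℤ => ∑ n ∈ t, c j n • fourier n)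
        atTop (nhds (G j)) := hasSumj j
    have h2 := Metric.tendsto_nhds.mp ht _ hkpos
    filter_upwards [h2] with t hs
    rwa [dist_eq_norm] at hs
  obtain ⟨s, hs0, hs1, hs2⟩ := ((ev 0).and ((ev 1).and (ev 2))).exists
  have Gval : ∀ (j : ℕ), ∀ x ∈ Icc (0:ℝ) (2*π),
      (G j) (x : AddCircle (2*π)) = deriv^[j] g x := by
    intro j x hx
    rcases lt_or_eq_of_le hx.2 with h2 | h2
    · exact AddCircle.liftIco_zero_coe_apply ⟨hx.1, h2⟩
    · subst h2
      have e1 : ((2*π : ℝ) : AddCircle (2*π)) = ((0:ℝ) : AddCircle (2*π)) := by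
        rw [AddCircle.coe_period]
        exact (QuotientAddGroup.mk_zero _).symm
      rw [e1, (hvan j).2]
      show AddCircle.liftIco (2*π) 0 (deriv^[j] g) ((0:ℝ) : AddCircle (2*π)) = 0
      rw [AddCircle.liftIco_zero_coe_apply ⟨le_refl (0:ℝ), hab⟩, (hvan j).1]
  have evalb : ∀ (j : ℕ), ‖(∑ n ∈ s, c j n • fourier n) - G j‖ < 1/(k+1) →
      ∀ x ∈ Icc (0:ℝ) (2*π),
      ‖(∑ n ∈ s, c j n * Complex.exp (Complex.I*n*x)) - deriv^[j] g x‖ ≤ 1/(k+1) := by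
    intro j hj x hx
    have h1 : (((∑ n ∈ s, c j n • fourier n) - G j : C(AddCircle (2*π), ℂ)) : AddCircle (2*π) → ℂ) (x : AddCircle (2*π))
        = (∑ n ∈ s, c j n * Complex.exp (Complex.I*n*x)) - deriv^[j] g x := by
      rw [ContinuousMap.sub_apply, ContinuousMap.sum_apply, Gval j x hx]
      congr 1
      refine Finset.sum_congr rfl fun n _ => ?_
      rw [ContinuousMap.smul_apply, fourier_eval, smul_eq_mul]
    rw [← h1]
    exact le_trans (ContinuousMap.norm_coe_le_norm _ _) hj.le
  refine ⟨s, fun n => c 0 n, fun x hx => ⟨evalb 0 hs0 x hx, ?_, ?_⟩⟩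
  · have h1 := evalb 1 hs1 x hx
    rw [show deriv^[1] g = deriv g from by rw [Function.iterate_one]] at h1
    have hsum : (∑ n ∈ s, (Complex.I*n) * (c 0 n * Complex.exp (Complex.I*n*x)))
        = ∑ n ∈ s, c 1 n * Complex.exp (Complex.I*n*x) :=
      Finset.sum_congr rfl fun n _ => by rw [rel 0 n]; ring
    rw [hsum]; exact h1
  · have h1 := evalb 2 hs2 x hx
    rw [show deriv^[2] g = deriv (deriv g) from by
      rw [Function.iterate_succ_apply', Function.iterate_one]] at h1
    have hsum : (∑ n ∈ s, (Complex.I*n)^2 * (c 0 n * Complex.exp (Complex.I*n*x)))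
        = ∑ n ∈ s, c 2 n * Complex.exp (Complex.I*n*x) :=
      Finset.sum_congr rfl fun n _ => by rw [rel 1 n, rel 0 n]; ring
    rw [hsum]; exact h1

end ApsAux2


namespace ApsAux3

lemma hasDerivAt_cexp_real (m : ℂ) (x : ℝ) :
    HasDerivAt (fun y : ℝ => Complex.exp (m * ↑y)) (m * Complex.exp (m * ↑x)) x := by
  have hlin : HasDerivAt (fun z : ℂ => m * z) m ((x:ℝ) : ℂ) := by
    simpa using (hasDerivAt_id ((x:ℝ):ℂ)).const_mul m
  have h2 : HasDerivAt (fun z : ℂ => Complex.exp (m * z)) (Complex.exp (m * ↑x) * m) (↑x) :=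
    hlin.cexp
  have h3 := h2.comp_ofReal
  convert h3 using 1
  ring

lemma hasDerivAt_term (b m : ℂ) (x : ℝ) :
    HasDerivAt (fun y : ℝ => b * Complex.exp (m * ↑y)) (m * (b * Complex.exp (m * ↑x))) x := by
  have h := (hasDerivAt_cexp_real m x).const_mul b
  exact h.congr_deriv (by ring)

lemma qsum_hasDeriv (s : Finset ℤ) (a : ℤ → ℂ) (x : ℝ) :
    HasDerivAt (fun y : ℝ => ∑ n ∈ s, a n * Complex.exp (Complex.I*n*y))
      (∑ n ∈ s, (Complex.I*n) * (a n * Complex.exp (Complex.I*n*x))) x := by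
  apply HasDerivAt.fun_sum
  intro n _
  exact hasDerivAt_term (a n) (Complex.I*n) x

lemma q1sum_hasDeriv (s : Finset ℤ) (a : ℤ → ℂ) (x : ℝ) :
    HasDerivAt (fun y : ℝ => ∑ n ∈ s, (Complex.I*n) * (a n * Complex.exp (Complex.I*n*y)))
      (∑ n ∈ s, (Complex.I*n)^2 * (a n * Complex.exp (Complex.I*n*x))) x := by
  apply HasDerivAt.fun_sum
  intro n _
  have h := (hasDerivAt_term (a n) (Complex.I*n) x).const_mul (Complex.I*n)
  exact h.congr_deriv (by ring)

lemma EW_deriv (mE : ℂ) {E0 w w1 : ℝ → ℂ} (hE0 : ∀ x, HasDerivAt E0 (mE * E0 x) x)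
    (hw : ∀ x, HasDerivAt w (w1 x) x) (x : ℝ) :
    HasDerivAt (fun y : ℝ => E0 y * w y) (mE * E0 x * w x + E0 x * w1 x) x :=
  (hE0 x).mul (hw x)

lemma EW_deriv2 (mE : ℂ) {E0 w w1 w2 : ℝ → ℂ} (hE0 : ∀ x, HasDerivAt E0 (mE * E0 x) x)
    (hw : ∀ x, HasDerivAt w (w1 x) x) (hw1 : ∀ x, HasDerivAt w1 (w2 x) x) (x : ℝ) :
    HasDerivAt (fun y : ℝ => mE * E0 y * w y + E0 y * w1 y)
      (mE * (mE * E0 x) * w x + mE * E0 x * w1 x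
        + (mE * E0 x * w1 x + E0 x * w2 x)) x := by
  have h1 := ((hE0 x).const_mul mE).mul (hw x)
  exact h1.add (EW_deriv mE hE0 hw1 x)

lemma norm_mul_le_of_le_one {m z : ℂ} (hm : ‖m‖ ≤ 1) : ‖m * z‖ ≤ ‖z‖ := by
  rw [norm_mul]
  calc ‖m‖ * ‖z‖ ≤ 1 * ‖z‖ := mul_le_mul_of_nonneg_right hm (norm_nonneg z)
    _ = ‖z‖ := one_mul _

lemma squeeze_int (Φ : ℕ → ℝ → ℂ) (M : ℝ) (hcont : ∀ k, Continuous (Φ k))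
    (hb : ∀ k, ∀ x ∈ Icc (0:ℝ) (2*π), ‖Φ k x‖ ≤ M * (1/((k:ℝ)+1))) :
    Tendsto (fun k => ∫ x in (0:ℝ)..(2*π), ‖Φ k x‖^2) atTop (nhds 0) := by
  have hπ := Real.pi_pos
  apply squeeze_zero (g := fun k : ℕ => (2*π) * (M * (1/((k:ℝ)+1)))^2)
  · intro k
    apply intervalIntegral.integral_nonneg (by linarith)
    intro x _
    positivity
  · intro k
    have hInt1 : IntervalIntegrable (fun x => ‖Φ k x‖^2) volume 0 (2*π) :=
      (((hcont k).norm.pow 2)).intervalIntegrable _ _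
    have hle : ∀ x ∈ Icc (0:ℝ) (2*π), ‖Φ k x‖^2 ≤ (M * (1/((k:ℝ)+1)))^2 := by
      intro x hx
      have h1 := hb k x hx
      have h0 := norm_nonneg (Φ k x)
      nlinarith
    calc ∫ x in (0:ℝ)..(2*π), ‖Φ k x‖^2
        ≤ ∫ _x in (0:ℝ)..(2*π), (M * (1/((k:ℝ)+1)))^2 :=
          intervalIntegral.integral_mono_on (by linarith) hInt1 intervalIntegrable_const hle
      _ = (2*π) * (M*(1/((k:ℝ)+1)))^2 := by
          rw [intervalIntegral.integral_const, smul_eq_mul]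
          ring
  · have h1 : Tendsto (fun k : ℕ => 1/((k:ℝ)+1)) atTop (nhds 0) :=
      tendsto_one_div_add_atTop_nhds_zero_nat
    have h2 : Tendsto (fun k : ℕ => (2*π) * (M * (1/((k:ℝ)+1)))^2) atTop
        (nhds ((2*π) * (M*0)^2)) := ((h1.const_mul M).pow 2).const_mul (2*π)
    simpa using h2

end ApsAux3


/-- every smooth function vanishing near 0 and 2π is a graph-norm limit
(for the transformed APS operator D) of finite linear combinations of the exponentials
x ↦ e^{i(n+ε/4)x}. -/
theorem aps_smooth_vanishing_near_endpoints_in_closure_domain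
    (G ε α : ℝ) (hG : 0 < G) (hε : ε ∈ Set.Ioo (0 : ℝ) 4)
    (D : (ℝ → ℂ) → (ℝ → ℂ))
    (hD : ∀ (h : ℝ → ℂ) (x : ℝ),
      D h x = (3 * Real.pi * G : ℂ) *
        (-16 * (Real.sin (x / 2) : ℂ) ^ 2 * deriv (deriv h) x
         - 8 * (Real.sin x : ℂ) * deriv h x
         + ((((α - 2) / 2 : ℝ) : ℂ) * (Real.cos x : ℂ) - (α : ℂ) / 2) * h x))
    (f : ℝ → ℂ) (hf : ContDiff ℝ (⊤ : ℕ∞) f)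
    (hvanish : ∃ δ > (0 : ℝ),
      (∀ x ∈ Set.Icc (0 : ℝ) δ, f x = 0) ∧
      (∀ x ∈ Set.Icc (2 * π - δ) (2 * π), f x = 0)) :
    ∃ p : ℕ → ℝ → ℂ,
      (∀ k : ℕ, ∃ s : Finset ℤ, ∃ a : ℤ → ℂ, ∀ x : ℝ,
        p k x = ∑ n ∈ s, a n * Complex.exp (Complex.I * ((n : ℂ) + (ε : ℂ) / 4) * (x : ℂ))) ∧
      Filter.Tendsto
        (fun k => ∫ x in (0 : ℝ)..(2 * π), ‖p k x - f x‖ ^ 2)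
        Filter.atTop (nhds 0) ∧
      Filter.Tendsto
        (fun k => ∫ x in (0 : ℝ)..(2 * π), ‖D (p k) x - D f x‖ ^ 2)
        Filter.atTop (nhds 0) := by
  obtain ⟨δ, hδpos, hv1, hv2⟩ := hvanish
  have hπ := Real.pi_pos
  have hfS : ContDiff ℝ ∞ f := hf.of_le (by simp)
  set mE : ℂ := Complex.I * ((ε:ℂ)/4) with hmEdef
  have hmE : ‖mE‖ ≤ 1 := by
    rw [hmEdef, norm_mul, Complex.norm_I, one_mul]
    have h4 : ((ε:ℂ)/4) = (((ε/4 : ℝ)) : ℂ) := by push_cast; ring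
    rw [h4, Complex.norm_real, Real.norm_eq_abs, abs_of_pos (by linarith [hε.1])]
    linarith [hε.2]
  have hnE : ∀ x : ℝ, ‖Complex.exp (mE * ↑x)‖ = 1 := by
    intro x
    have h1 : mE * ↑x = ((ε/4*x : ℝ) : ℂ) * Complex.I := by rw [hmEdef]; push_cast; ring
    rw [h1, Complex.norm_exp_ofReal_mul_I]
  set g : ℝ → ℂ := fun x => Complex.exp (-(mE * ↑x)) * f x with hgdef
  have hgsm : ContDiff ℝ ∞ g := by
    rw [hgdef]
    apply ContDiff.mul ?_ hfS
    apply Complex.contDiff_exp.comp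
    apply ContDiff.neg
    exact contDiff_const.mul Complex.ofRealCLM.contDiff
  have hfeq : ∀ x : ℝ, f x = Complex.exp (mE * ↑x) * g x := by
    intro x
    rw [hgdef]
    rw [← mul_assoc, ← Complex.exp_add, add_neg_cancel, Complex.exp_zero, one_mul]
  have hvanj : ∀ j : ℕ, deriv^[j] g 0 = 0 ∧ deriv^[j] g (2*π) = 0 := by
    intro j
    constructor
    · refine ApsAux.iter_deriv_zero_on_Icc hgsm hδpos ?_ j 0 ⟨le_refl _, hδpos.le⟩
      intro x hx; rw [hgdef]; simp [hv1 x hx]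
    · refine ApsAux.iter_deriv_zero_on_Icc hgsm (show 2*π - δ < 2*π by linarith) ?_ j (2*π)
        ⟨by linarith, le_refl _⟩
      intro x hx; rw [hgdef]; simp [hv2 x hx]
  choose s a hsa using fun k => ApsAux2.fourier_approx g hgsm hvanj k
  -- calculus data for g
  have hgdiff : Differentiable ℝ g := hgsm.differentiable (by norm_num)
  have hg1sm : ContDiff ℝ ∞ (deriv g) := (contDiff_infty_iff_deriv.mp hgsm).2
  have hg1diff : Differentiable ℝ (deriv g) := hg1sm.differentiable (by norm_num)
  have hg2cont : Continuous (deriv (deriv g)) := (contDiff_infty_iff_deriv.mp hg1sm).2.continuous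
  have hgder : ∀ x, HasDerivAt g (deriv g x) x := fun x => (hgdiff x).hasDerivAt
  have hg1der : ∀ x, HasDerivAt (deriv g) (deriv (deriv g) x) x := fun x => (hg1diff x).hasDerivAt
  -- abbreviations
  set E : ℝ → ℂ := fun x => Complex.exp (mE * ↑x) with hEdef
  set q : ℕ → ℝ → ℂ := fun k x => ∑ n ∈ s k, a k n * Complex.exp (Complex.I*n*x) with hqdef
  set q1 : ℕ → ℝ → ℂ :=
    fun k x => ∑ n ∈ s k, (Complex.I*n) * (a k n * Complex.exp (Complex.I*n*x)) with hq1def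
  set q2 : ℕ → ℝ → ℂ :=
    fun k x => ∑ n ∈ s k, (Complex.I*n)^2 * (a k n * Complex.exp (Complex.I*n*x)) with hq2def
  set p : ℕ → ℝ → ℂ := fun k x => E x * q k x with hpdef
  have hnE' : ∀ x : ℝ, ‖E x‖ = 1 := by intro x; rw [hEdef]; exact hnE x
  have hb : ∀ k : ℕ, ∀ x ∈ Icc (0:ℝ) (2*π),
      ‖q k x - g x‖ ≤ 1/((k:ℝ)+1) ∧ ‖q1 k x - deriv g x‖ ≤ 1/((k:ℝ)+1) ∧
      ‖q2 k x - deriv (deriv g) x‖ ≤ 1/((k:ℝ)+1) := by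
    intro k x hx
    rw [hqdef, hq1def, hq2def]
    exact hsa k x hx
  -- derivative formulas
  have hEder : ∀ x, HasDerivAt E (mE * E x) x := by
    intro x; rw [hEdef]; exact ApsAux3.hasDerivAt_cexp_real mE x
  have hqder : ∀ k x, HasDerivAt (q k) (q1 k x) x := by
    intro k x; rw [hqdef, hq1def]; exact ApsAux3.qsum_hasDeriv (s k) (a k) x
  have hq1der : ∀ k x, HasDerivAt (q1 k) (q2 k x) x := by
    intro k x; rw [hq1def, hq2def]; exact ApsAux3.q1sum_hasDeriv (s k) (a k) x
  have hpder1 : ∀ k, deriv (p k) = fun x => mE * E x * q k x + E x * q1 k x := by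
    intro k; funext x
    rw [hpdef]
    exact (ApsAux3.EW_deriv mE hEder (hqder k) x).deriv
  have hpder2 : ∀ k, deriv (deriv (p k)) = fun x =>
      mE * (mE * E x) * q k x + mE * E x * q1 k x + (mE * E x * q1 k x + E x * q2 k x) := by
    intro k; funext x
    rw [hpder1 k]
    exact (ApsAux3.EW_deriv2 mE hEder (hqder k) (hq1der k) x).deriv
  have hfeqf : f = fun x => E x * g x := by
    funext x; rw [hEdef]; exact hfeq x
  have hfder1 : deriv f = fun x => mE * E x * g x + E x * deriv g x := by
    funext x
    conv_lhs => rw [hfeqf]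
    exact (ApsAux3.EW_deriv mE hEder hgder x).deriv
  have hfder2 : deriv (deriv f) = fun x =>
      mE * (mE * E x) * g x + mE * E x * deriv g x
        + (mE * E x * deriv g x + E x * deriv (deriv g) x) := by
    funext x
    rw [hfder1]
    exact (ApsAux3.EW_deriv2 mE hEder hgder hg1der x).deriv
  -- pointwise bounds
  have hbp : ∀ k : ℕ, ∀ x ∈ Icc (0:ℝ) (2*π), ‖p k x - f x‖ ≤ 1 * (1/((k:ℝ)+1)) := by
    intro k x hx
    have h0 := (hb k x hx).1
    have e : p k x - f x = E x * (q k x - g x) := by rw [hpdef, hfeq x, hEdef]; ring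
    rw [e, norm_mul, hnE', one_mul, one_mul]
    exact h0
  have hb1 : ∀ k : ℕ, ∀ x ∈ Icc (0:ℝ) (2*π),
      ‖deriv (p k) x - deriv f x‖ ≤ 2 * (1/((k:ℝ)+1)) := by
    intro k x hx
    obtain ⟨h0, h1, -⟩ := hb k x hx
    rw [hpder1 k, hfder1]
    have e : (mE * E x * q k x + E x * q1 k x) - (mE * E x * g x + E x * deriv g x)
        = mE * (E x * (q k x - g x)) + E x * (q1 k x - deriv g x) := by ring
    simp only []
    rw [e]
    have t0 : ‖E x * (q k x - g x)‖ ≤ 1/((k:ℝ)+1) := by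
      rw [norm_mul, hnE', one_mul]; exact h0
    have t1 : ‖E x * (q1 k x - deriv g x)‖ ≤ 1/((k:ℝ)+1) := by
      rw [norm_mul, hnE', one_mul]; exact h1
    calc ‖mE * (E x * (q k x - g x)) + E x * (q1 k x - deriv g x)‖
        ≤ ‖mE * (E x * (q k x - g x))‖ + ‖E x * (q1 k x - deriv g x)‖ := norm_add_le _ _
      _ ≤ 1/((k:ℝ)+1) + 1/((k:ℝ)+1) :=
          add_le_add (le_trans (ApsAux3.norm_mul_le_of_le_one hmE) t0) t1
      _ = 2 * (1/((k:ℝ)+1)) := by ring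
  have hb2 : ∀ k : ℕ, ∀ x ∈ Icc (0:ℝ) (2*π),
      ‖deriv (deriv (p k)) x - deriv (deriv f) x‖ ≤ 4 * (1/((k:ℝ)+1)) := by
    intro k x hx
    obtain ⟨h0, h1, h2⟩ := hb k x hx
    rw [hpder2 k, hfder2]
    simp only []
    have e : (mE * (mE * E x) * q k x + mE * E x * q1 k x + (mE * E x * q1 k x + E x * q2 k x))
        - (mE * (mE * E x) * g x + mE * E x * deriv g x
            + (mE * E x * deriv g x + E x * deriv (deriv g) x))
        = mE * (mE * (E x * (q k x - g x))) + mE * (E x * (q1 k x - deriv g x))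
          + (mE * (E x * (q1 k x - deriv g x)) + E x * (q2 k x - deriv (deriv g) x)) := by ring
    rw [e]
    have t0 : ‖E x * (q k x - g x)‖ ≤ 1/((k:ℝ)+1) := by
      rw [norm_mul, hnE', one_mul]; exact h0
    have t1 : ‖E x * (q1 k x - deriv g x)‖ ≤ 1/((k:ℝ)+1) := by
      rw [norm_mul, hnE', one_mul]; exact h1
    have t2 : ‖E x * (q2 k x - deriv (deriv g) x)‖ ≤ 1/((k:ℝ)+1) := by
      rw [norm_mul, hnE', one_mul]; exact h2
    have u0 : ‖mE * (mE * (E x * (q k x - g x)))‖ ≤ 1/((k:ℝ)+1) :=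
      le_trans (ApsAux3.norm_mul_le_of_le_one hmE)
        (le_trans (ApsAux3.norm_mul_le_of_le_one hmE) t0)
    have u1 : ‖mE * (E x * (q1 k x - deriv g x))‖ ≤ 1/((k:ℝ)+1) :=
      le_trans (ApsAux3.norm_mul_le_of_le_one hmE) t1
    calc ‖mE * (mE * (E x * (q k x - g x))) + mE * (E x * (q1 k x - deriv g x))
          + (mE * (E x * (q1 k x - deriv g x)) + E x * (q2 k x - deriv (deriv g) x))‖
        ≤ ‖mE * (mE * (E x * (q k x - g x))) + mE * (E x * (q1 k x - deriv g x))‖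
          + ‖mE * (E x * (q1 k x - deriv g x)) + E x * (q2 k x - deriv (deriv g) x)‖ :=
          norm_add_le _ _
      _ ≤ (‖mE * (mE * (E x * (q k x - g x)))‖ + ‖mE * (E x * (q1 k x - deriv g x))‖)
          + (‖mE * (E x * (q1 k x - deriv g x))‖ + ‖E x * (q2 k x - deriv (deriv g) x)‖) :=
          add_le_add (norm_add_le _ _) (norm_add_le _ _)
      _ ≤ (1/((k:ℝ)+1) + 1/((k:ℝ)+1)) + (1/((k:ℝ)+1) + 1/((k:ℝ)+1)) :=
          add_le_add (add_le_add u0 u1) (add_le_add u1 t2)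
      _ = 4 * (1/((k:ℝ)+1)) := by ring
  -- continuity facts
  have hEcont : Continuous E := by
    rw [hEdef]; exact Complex.continuous_exp.comp (continuous_const.mul Complex.continuous_ofReal)
  have hqcont : ∀ k, Continuous (q k) := by
    intro k; rw [hqdef]
    exact continuous_finset_sum _ fun n _ =>
      continuous_const.mul (Complex.continuous_exp.comp
        (continuous_const.mul Complex.continuous_ofReal))
  have hq1cont : ∀ k, Continuous (q1 k) := by
    intro k; rw [hq1def]
    exact continuous_finset_sum _ fun n _ =>
      continuous_const.mul (continuous_const.mul (Complex.continuous_exp.comp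
        (continuous_const.mul Complex.continuous_ofReal)))
  have hq2cont : ∀ k, Continuous (q2 k) := by
    intro k; rw [hq2def]
    exact continuous_finset_sum _ fun n _ =>
      continuous_const.mul (continuous_const.mul (Complex.continuous_exp.comp
        (continuous_const.mul Complex.continuous_ofReal)))
  have hpcont : ∀ k, Continuous (p k) := by
    intro k; rw [hpdef]; exact hEcont.mul (hqcont k)
  have hgcont : Continuous g := hgsm.continuous
  have hg1cont : Continuous (deriv g) := hg1sm.continuous
  have hfcont : Continuous f := hfS.continuous
  have hp1cont : ∀ k, Continuous (deriv (p k)) := by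
    intro k; rw [hpder1 k]
    exact ((continuous_const.mul hEcont).mul (hqcont k)).add (hEcont.mul (hq1cont k))
  have hp2cont : ∀ k, Continuous (deriv (deriv (p k))) := by
    intro k; rw [hpder2 k]
    exact (((continuous_const.mul (continuous_const.mul hEcont)).mul (hqcont k)).add
      ((continuous_const.mul hEcont).mul (hq1cont k))).add
      (((continuous_const.mul hEcont).mul (hq1cont k)).add (hEcont.mul (hq2cont k)))
  have hf1cont : Continuous (deriv f) := by
    rw [hfder1]
    exact ((continuous_const.mul hEcont).mul hgcont).add (hEcont.mul hg1cont)
  have hf2cont : Continuous (deriv (deriv f)) := by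
    rw [hfder2]
    exact (((continuous_const.mul (continuous_const.mul hEcont)).mul hgcont).add
      ((continuous_const.mul hEcont).mul hg1cont)).add
      (((continuous_const.mul hEcont).mul hg1cont).add (hEcont.mul hg2cont))
  have hsincont : Continuous (fun x : ℝ => ((Real.sin (x/2) : ℝ) : ℂ)) :=
    Complex.continuous_ofReal.comp (Real.continuous_sin.comp (continuous_id.div_const 2))
  have hsincont2 : Continuous (fun x : ℝ => ((Real.sin x : ℝ) : ℂ)) :=
    Complex.continuous_ofReal.comp Real.continuous_sin
  have hcoscont : Continuous (fun x : ℝ => ((Real.cos x : ℝ) : ℂ)) :=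
    Complex.continuous_ofReal.comp Real.continuous_cos
  have hDpcont : ∀ k, Continuous (fun x => D (p k) x - D f x) := by
    intro k
    simp only [hD]
    apply Continuous.sub
    · exact continuous_const.mul
        ((((continuous_const.mul (hsincont.pow 2)).mul (hp2cont k)).sub
          ((continuous_const.mul hsincont2).mul (hp1cont k))).add
          (((continuous_const.mul hcoscont).sub continuous_const).mul (hpcont k)))
    · exact continuous_const.mul
        ((((continuous_const.mul (hsincont.pow 2)).mul hf2cont).sub
          ((continuous_const.mul hsincont2).mul hf1cont)).add
          (((continuous_const.mul hcoscont).sub continuous_const).mul hfcont))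
  -- final assembly
  refine ⟨p, ?_, ?_, ?_⟩
  · intro k
    refine ⟨s k, a k, fun x => ?_⟩
    rw [hpdef, hqdef, hEdef]
    simp only []
    rw [Finset.mul_sum]
    refine Finset.sum_congr rfl fun n _ => ?_
    rw [show Complex.I * ((n:ℂ) + (ε:ℂ)/4) * (x:ℂ) = mE*(x:ℂ) + Complex.I*(n:ℂ)*(x:ℂ) from by
      rw [hmEdef]; ring, Complex.exp_add]
    ring
  · exact ApsAux3.squeeze_int (fun k x => p k x - f x) 1
      (fun k => (hpcont k).sub hfcont) hbp
  · have hnorm3 : ‖(3*(π:ℝ)*(G:ℝ) : ℂ)‖ = 3*π*G := by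
      have : ((3*π*G : ℝ) : ℂ) = (3*(π:ℝ)*(G:ℝ) : ℂ) := by push_cast; ring
      rw [← this, Complex.norm_real, Real.norm_eq_abs, abs_of_pos (by positivity)]
    have hDb : ∀ k : ℕ, ∀ x ∈ Icc (0:ℝ) (2*π),
        ‖D (p k) x - D f x‖ ≤ (3*π*G*(80 + (|α-2|/2 + |α|/2))) * (1/((k:ℝ)+1)) := by
      intro k x hx
      rw [hD, hD, ← mul_sub, norm_mul]
      have e2 : (-16 * (Real.sin (x / 2) : ℂ) ^ 2 * deriv (deriv (p k)) x
            - 8 * (Real.sin x : ℂ) * deriv (p k) x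
            + ((((α - 2) / 2 : ℝ) : ℂ) * (Real.cos x : ℂ) - (α : ℂ) / 2) * p k x)
          - (-16 * (Real.sin (x / 2) : ℂ) ^ 2 * deriv (deriv f) x
            - 8 * (Real.sin x : ℂ) * deriv f x
            + ((((α - 2) / 2 : ℝ) : ℂ) * (Real.cos x : ℂ) - (α : ℂ) / 2) * f x)
          = (-16 * (Real.sin (x / 2) : ℂ) ^ 2) * (deriv (deriv (p k)) x - deriv (deriv f) x)
            - (8 * (Real.sin x : ℂ)) * (deriv (p k) x - deriv f x)
            + ((((α - 2) / 2 : ℝ) : ℂ) * (Real.cos x : ℂ) - (α : ℂ) / 2) * (p k x - f x) := by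
        ring
      rw [e2]
      have c1 : ‖(-16 * (Real.sin (x / 2) : ℂ) ^ 2)‖ ≤ 16 := by
        rw [norm_mul, norm_pow, Complex.norm_real, Real.norm_eq_abs]
        have hs : |Real.sin (x/2)| ≤ 1 :=
          abs_le.mpr ⟨Real.neg_one_le_sin _, Real.sin_le_one _⟩
        have h16 : ‖(-16:ℂ)‖ = 16 := by
          rw [norm_neg]; norm_num
        rw [h16]
        nlinarith [abs_nonneg (Real.sin (x/2))]
      have c2 : ‖((8:ℂ) * (Real.sin x : ℂ))‖ ≤ 8 := by
        rw [norm_mul, Complex.norm_real, Real.norm_eq_abs]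
        have hs : |Real.sin x| ≤ 1 := abs_le.mpr ⟨Real.neg_one_le_sin _, Real.sin_le_one _⟩
        have h8 : ‖(8:ℂ)‖ = 8 := by norm_num
        rw [h8]
        nlinarith
      have c3 : ‖(((α-2)/2:ℝ):ℂ) * (Real.cos x : ℂ) - (α:ℂ)/2‖ ≤ |α-2|/2 + |α|/2 := by
        calc ‖(((α-2)/2:ℝ):ℂ) * (Real.cos x : ℂ) - (α:ℂ)/2‖
            ≤ ‖(((α-2)/2:ℝ):ℂ) * (Real.cos x : ℂ)‖ + ‖(α:ℂ)/2‖ := norm_sub_le _ _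
          _ ≤ |α-2|/2 + |α|/2 := by
              rw [norm_mul, Complex.norm_real, Real.norm_eq_abs,
                show (α:ℂ)/2 = ((α/2:ℝ):ℂ) from by push_cast; ring,
                Complex.norm_real, Real.norm_eq_abs, Complex.norm_real, Real.norm_eq_abs,
                abs_div, abs_div]
              have hc : |Real.cos x| ≤ 1 :=
                abs_le.mpr ⟨Real.neg_one_le_cos _, Real.cos_le_one _⟩
              have h2 : |(2:ℝ)| = 2 := by norm_num
              rw [h2]
              nlinarith [abs_nonneg (α-2), abs_nonneg ((α-2)/2), abs_nonneg α]
      have hΔ2 := hb2 k x hx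
      have hΔ1 := hb1 k x hx
      have hΔ0 := hbp k x hx
      have hu : (0:ℝ) ≤ 1/((k:ℝ)+1) := by positivity
      have main : ‖(-16 * (Real.sin (x / 2) : ℂ) ^ 2) * (deriv (deriv (p k)) x - deriv (deriv f) x)
            - (8 * (Real.sin x : ℂ)) * (deriv (p k) x - deriv f x)
            + ((((α - 2) / 2 : ℝ) : ℂ) * (Real.cos x : ℂ) - (α : ℂ) / 2) * (p k x - f x)‖
          ≤ (80 + (|α-2|/2 + |α|/2)) * (1/((k:ℝ)+1)) := by
        calc ‖(-16 * (Real.sin (x / 2) : ℂ) ^ 2) * (deriv (deriv (p k)) x - deriv (deriv f) x)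
            - (8 * (Real.sin x : ℂ)) * (deriv (p k) x - deriv f x)
            + ((((α - 2) / 2 : ℝ) : ℂ) * (Real.cos x : ℂ) - (α : ℂ) / 2) * (p k x - f x)‖
            ≤ ‖(-16 * (Real.sin (x / 2) : ℂ) ^ 2) * (deriv (deriv (p k)) x - deriv (deriv f) x)
              - (8 * (Real.sin x : ℂ)) * (deriv (p k) x - deriv f x)‖
              + ‖((((α - 2) / 2 : ℝ) : ℂ) * (Real.cos x : ℂ) - (α : ℂ) / 2) * (p k x - f x)‖ :=
              norm_add_le _ _
          _ ≤ (‖(-16 * (Real.sin (x / 2) : ℂ) ^ 2) * (deriv (deriv (p k)) x - deriv (deriv f) x)‖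
              + ‖(8 * (Real.sin x : ℂ)) * (deriv (p k) x - deriv f x)‖)
              + ‖((((α - 2) / 2 : ℝ) : ℂ) * (Real.cos x : ℂ) - (α : ℂ) / 2) * (p k x - f x)‖ :=
              add_le_add_left (norm_sub_le _ _) _
          _ ≤ (16 * (4 * (1/((k:ℝ)+1))) + 8 * (2 * (1/((k:ℝ)+1))))
              + (|α-2|/2 + |α|/2) * (1 * (1/((k:ℝ)+1))) := by
              refine add_le_add (add_le_add ?_ ?_) ?_
              · rw [norm_mul]
                exact mul_le_mul c1 hΔ2 (norm_nonneg _) (by norm_num)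
              · rw [norm_mul]
                exact mul_le_mul c2 hΔ1 (norm_nonneg _) (by norm_num)
              · rw [norm_mul]
                exact mul_le_mul c3 hΔ0 (norm_nonneg _)
                  (by positivity)
          _ = (80 + (|α-2|/2 + |α|/2)) * (1/((k:ℝ)+1)) := by ring
      calc ‖(3*(π:ℝ)*(G:ℝ) : ℂ)‖ * ‖_‖
          ≤ (3*π*G) * ((80 + (|α-2|/2 + |α|/2)) * (1/((k:ℝ)+1))) := by
            rw [hnorm3]
            exact mul_le_mul_of_nonneg_left main (by positivity)
        _ = (3*π*G*(80 + (|α-2|/2 + |α|/2))) * (1/((k:ℝ)+1)) := by ring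
    exact ApsAux3.squeeze_int (fun k x => D (p k) x - D f x)
      (3*π*G*(80 + (|α-2|/2 + |α|/2))) hDpcont hDb
end

section
/- Let g : (0, 2π) → ℂ be twice differentiable, and define (Lg)(x) = 4·sin(x/2)·g'(x) + cos(x/2)·g(x). Then for every x ∈ (0, 2π) where Lg is differentiable (which holds automatically) one has the square-form identity: −16·sin²(x/2)·g''(x) − 8·sin(x)·g'(x) + ( ((α−2)/2)·cos(x) − α/2 )·g(x) = −( L(Lg)(x) + (α+1)·sin²(x/2)·g(x) ). -/
open scoped Real

/-- the transformed APS operator (divided by 3πG) equals minus the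
square of the first-order operator L = 4 sin(x/2) d/dx + cos(x/2) plus the potential
−(α+1)sin²(x/2). -/
theorem aps_operator_as_minus_square
    (α : ℝ)
    (g : ℝ → ℂ)
    (hg : ∀ x ∈ Set.Ioo (0 : ℝ) (2 * π), DifferentiableAt ℝ g x)
    (hg' : ∀ x ∈ Set.Ioo (0 : ℝ) (2 * π), DifferentiableAt ℝ (deriv g) x)
    (L : (ℝ → ℂ) → (ℝ → ℂ))
    (hL : ∀ (h : ℝ → ℂ) (x : ℝ),
      L h x = 4 * (Real.sin (x / 2) : ℂ) * deriv h x + (Real.cos (x / 2) : ℂ) * h x) :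
    ∀ x ∈ Set.Ioo (0 : ℝ) (2 * π),
      -16 * (Real.sin (x / 2) : ℂ) ^ 2 * deriv (deriv g) x
        - 8 * (Real.sin x : ℂ) * deriv g x
        + ((((α - 2) / 2 : ℝ) : ℂ) * (Real.cos x : ℂ) - (α : ℂ) / 2) * g x
      = -(L (L g) x + ((α : ℂ) + 1) * (Real.sin (x / 2) : ℂ) ^ 2 * g x) := by
  intro x hx
  have hgx := hg x hx
  have hg'x := hg' x hx
  -- derivative of the coerced half-angle sine and cosine
  have hhalf : HasDerivAt (fun y : ℝ => y / 2) (1 / 2 : ℝ) x := by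
    simpa using (hasDerivAt_id x).div_const 2
  have hsR : HasDerivAt (fun y : ℝ => Real.sin (y / 2)) (Real.cos (x / 2) * (1 / 2)) x :=
    ((Real.hasDerivAt_sin (x / 2)).comp x hhalf :)
  have hcR : HasDerivAt (fun y : ℝ => Real.cos (y / 2)) (-Real.sin (x / 2) * (1 / 2)) x :=
    ((Real.hasDerivAt_cos (x / 2)).comp x hhalf :)
  have hs : HasDerivAt (fun y : ℝ => (Real.sin (y / 2) : ℂ))
      ((Real.cos (x / 2) * (1 / 2) : ℝ) : ℂ) x := hsR.ofReal_comp
  have hc : HasDerivAt (fun y : ℝ => (Real.cos (y / 2) : ℂ))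
      ((-Real.sin (x / 2) * (1 / 2) : ℝ) : ℂ) x := hcR.ofReal_comp
  have hLgfun : L g = fun y => 4 * (Real.sin (y / 2) : ℂ) * deriv g y
      + (Real.cos (y / 2) : ℂ) * g y := funext fun y => hL g y
  have hD : HasDerivAt (fun y => 4 * (Real.sin (y / 2) : ℂ) * deriv g y
      + (Real.cos (y / 2) : ℂ) * g y)
      ((4 * ((Real.cos (x / 2) * (1 / 2) : ℝ) : ℂ)) * deriv g x
        + 4 * (Real.sin (x / 2) : ℂ) * deriv (deriv g) x
        + (((-Real.sin (x / 2) * (1 / 2) : ℝ) : ℂ) * g x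
          + (Real.cos (x / 2) : ℂ) * deriv g x)) x := by
    exact (((hs.const_mul (4 : ℂ)).mul hg'x.hasDerivAt)).add (hc.mul hgx.hasDerivAt)
  have hderivLg : deriv (L g) x
      = (4 * ((Real.cos (x / 2) * (1 / 2) : ℝ) : ℂ)) * deriv g x
        + 4 * (Real.sin (x / 2) : ℂ) * deriv (deriv g) x
        + (((-Real.sin (x / 2) * (1 / 2) : ℝ) : ℂ) * g x
          + (Real.cos (x / 2) : ℂ) * deriv g x) := by
    rw [hLgfun]; exact hD.deriv
  rw [hL (L g) x, hderivLg, hL g x]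
  have hx2 : x = 2 * (x / 2) := by ring
  have hsin : Real.sin x = 2 * Real.sin (x / 2) * Real.cos (x / 2) := by
    have h := Real.sin_two_mul (x / 2); rwa [show 2 * (x / 2) = x by ring] at h
  have hcos : Real.cos x = 2 * Real.cos (x / 2) ^ 2 - 1 := by
    have h := Real.cos_two_mul (x / 2); rwa [show 2 * (x / 2) = x by ring] at h
  rw [hsin, hcos]
  have hpy : (Real.sin (x / 2) : ℂ) ^ 2 + (Real.cos (x / 2) : ℂ) ^ 2 = 1 := by
    norm_cast; exact Real.sin_sq_add_cos_sq _
  push_cast [← Complex.ofReal_sin, ← Complex.ofReal_cos]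
  linear_combination ((α : ℂ) - 1) * g x * hpy
end
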